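/- arXiv:2207.08426 — 5 statements merged into one kernel-verified Lean document; each statement's English description precedes it below -/
import Mathlib

section
/- Let S ⊆ ℝ^n be a nonempty finite set, X = convexHull(S), and let R be an n×n real matrix with xᵀR x = 0 for every x ∈ X. Assume X* := {x* ∈ X : xᵀR x* ≥ 0 for all x ∈ X} is nonempty. Then there exists a constant c > 0 such that for every x ∈ X: −min_{x' ∈ X} x'ᵀR x ≥ c·‖x − Π_{X*}(x)‖, where Π_{X*}(x) is the Euclidean projection of x onto X* and ‖·‖ the Euclidean norm. -/
noncomputable section

/-- The bilinear form `xᵀ R y` on Euclidean space. -/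
def quadForm {n : ℕ} (R : Matrix (Fin n) (Fin n) ℝ)
    (x y : EuclideanSpace ℝ (Fin n)) : ℝ :=
  ∑ i, ∑ j, x i * R i j * y j

/-- The set of symmetric Nash equilibria of the symmetric game `(R,R)` over
`convexHull ℝ S`. -/
def symNash {n : ℕ} (S : Set (EuclideanSpace ℝ (Fin n)))
    (R : Matrix (Fin n) (Fin n) ℝ) : Set (EuclideanSpace ℝ (Fin n)) :=
  {xs ∈ convexHull ℝ S | ∀ x ∈ convexHull ℝ S, 0 ≤ quadForm R x xs}

/-!
Write `m x = min_{s ∈ S} sᵀ R x`, which is also the minimum of `x' ↦ x'ᵀ R x` over `X`.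
Since `xᵀ R x = 0` on `X`, `m ≤ 0` on `X`, and `X*` is exactly where `m = 0`. For each `s ∈ S`
the piece of `X` on which `s` attains the minimum is cut out of the polytope `X` by finitely many
half-spaces, hence is again the convex hull of finitely many points, and `m = sᵀ R ·` on it.
At these finitely many vertices `v`, `dist v X* > 0` forces `m v < 0`, so a single `c > 0` gives
`c · dist v X* ≤ -m v` at all of them. On a piece, `c · dist · X* + sᵀ R ·` is convex (the distance
to a convex set is convex), so its maximum over the piece is attained at a vertex, where it is
`≤ 0`; at `x` this is the claimed bound, because `dist x X* = ‖x - p‖` for a nearest point `p`.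
-/

open Finset Metric Filter Topology

section HalfSpaceCut

variable {𝕜 E : Type*} [Field 𝕜] [AddCommGroup E] [Module 𝕜 E] (ℓ : E →ₗ[𝕜] 𝕜) (c : 𝕜)

/-- The point where the line through `a` and `b` crosses the hyperplane `ℓ = c`. -/
def cutPoint (a b : E) : E :=
  ((ℓ b - c) / (ℓ b - ℓ a)) • a + ((c - ℓ a) / (ℓ b - ℓ a)) • b

variable {ℓ c}

lemma map_cutPoint {a b : E} (h : ℓ a ≠ ℓ b) : ℓ (cutPoint ℓ c a b) = c := by
  have : ℓ b - ℓ a ≠ 0 := sub_ne_zero.2 h.symm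
  simp only [cutPoint, map_add, map_smul, smul_eq_mul]
  field_simp
  ring

lemma smul_cutPoint {a b : E} (h : ℓ a ≠ ℓ b) :
    (ℓ b - ℓ a) • cutPoint ℓ c a b = (ℓ b - c) • a + (c - ℓ a) • b := by
  have : ℓ b - ℓ a ≠ 0 := sub_ne_zero.2 h.symm
  simp only [cutPoint, smul_add, smul_smul, mul_div_cancel₀ _ this]

lemma sum_product_mul_mul_sub (A B : Finset E) (w : E → 𝕜) :
    ∑ ab ∈ A ×ˢ B, w ab.1 * w ab.2 * (ℓ ab.2 - ℓ ab.1) =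
      (∑ b ∈ B, w b * (ℓ b - c)) * ∑ a ∈ A, w a + (∑ a ∈ A, w a * (c - ℓ a)) * ∑ b ∈ B, w b := by
  simp only [sum_product, sum_mul, mul_sum]
  rw [sum_comm (s := B), ← sum_add_distrib]
  refine sum_congr rfl fun a _ => ?_
  rw [← sum_add_distrib]
  exact sum_congr rfl fun b _ => by ring

variable [LinearOrder 𝕜] [IsStrictOrderedRing 𝕜]

lemma cutPoint_mem_segment {a b : E} (ha : ℓ a ≤ c) (hb : c < ℓ b) :
    cutPoint ℓ c a b ∈ segment 𝕜 a b := by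
  have hab : 0 < ℓ b - ℓ a := by linarith
  refine ⟨_, _, div_nonneg (by linarith) hab.le, div_nonneg (by linarith) hab.le, ?_, rfl⟩
  field_simp
  ring

lemma sum_smul_cutPoint (A B : Finset E) (w : E → 𝕜) (hA : ∀ a ∈ A, ℓ a ≤ c)
    (hB : ∀ b ∈ B, c < ℓ b) :
    ∑ ab ∈ A ×ˢ B, (w ab.1 * w ab.2 * (ℓ ab.2 - ℓ ab.1)) • cutPoint ℓ c ab.1 ab.2 =
      (∑ b ∈ B, w b * (ℓ b - c)) • ∑ a ∈ A, w a • a +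
        (∑ a ∈ A, w a * (c - ℓ a)) • ∑ b ∈ B, w b • b := by
  have key : ∀ a ∈ A, ∀ b ∈ B,
      (w a * w b * (ℓ b - ℓ a)) • cutPoint ℓ c a b =
        (w b * (ℓ b - c)) • w a • a + (w a * (c - ℓ a)) • w b • b := by
    intro a ha b hb
    rw [mul_smul, smul_cutPoint (show ℓ a < ℓ b by linarith [hA a ha, hB b hb]).ne, smul_add,
      smul_smul, smul_smul, smul_smul, smul_smul]
    congr 2 <;> ring
  rw [sum_product, sum_congr rfl fun a ha => sum_congr rfl fun b hb => key a ha b hb,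
    Finset.sum_smul, Finset.smul_sum]
  simp only [sum_add_distrib, ← Finset.smul_sum, ← Finset.sum_smul]

/-- With `K`, `M` the weighted distances of `A` and `B` to the hyperplane, the identity
`K • x = (K - M) • ∑_A w a • a + ∑_{A × B} w a w b (ℓ b - ℓ a) • cutPoint a b` writes `x` as a
convex combination of `A` and the cut points. -/
lemma sum_add_sum_smul_mem_convexHull_cutPoints [DecidableEq E] {A B : Finset E} {w : E → 𝕜}
    (hA : ∀ a ∈ A, ℓ a ≤ c) (hB : ∀ b ∈ B, c < ℓ b) (hwA : ∀ a ∈ A, 0 ≤ w a)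
    (hwB : ∀ b ∈ B, 0 ≤ w b) (hw1 : ∑ a ∈ A, w a + ∑ b ∈ B, w b = 1)
    (hMK : ∑ b ∈ B, w b * (ℓ b - c) ≤ ∑ a ∈ A, w a * (c - ℓ a))
    (hK : 0 < ∑ a ∈ A, w a * (c - ℓ a)) :
    ∑ a ∈ A, w a • a + ∑ b ∈ B, w b • b ∈
      convexHull 𝕜 (↑(A ∪ (A ×ˢ B).image fun ab => cutPoint ℓ c ab.1 ab.2) : Set E) := by
  set K := ∑ a ∈ A, w a * (c - ℓ a)
  set M := ∑ b ∈ B, w b * (ℓ b - c)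
  let μ : E ⊕ E × E → 𝕜 :=
    Sum.elim (fun a => (K - M) * w a) fun ab => w ab.1 * w ab.2 * (ℓ ab.2 - ℓ ab.1)
  let z : E ⊕ E × E → E := Sum.elim id fun ab => cutPoint ℓ c ab.1 ab.2
  have hμ0 : ∀ i ∈ A.disjSum (A ×ˢ B), 0 ≤ μ i := by
    rintro (a | ⟨a, b⟩) hi
    · exact mul_nonneg (sub_nonneg.2 hMK) (hwA a (inl_mem_disjSum.1 hi))
    · obtain ⟨ha, hb⟩ := mem_product.1 (inr_mem_disjSum.1 hi)
      exact mul_nonneg (mul_nonneg (hwA a ha) (hwB b hb)) (by linarith [hA a ha, hB b hb])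
  have hμ : ∑ i ∈ A.disjSum (A ×ˢ B), μ i = K := by
    simp only [μ, sum_disjSum, Sum.elim_inl, Sum.elim_inr, sum_product_mul_mul_sub (c := c),
      ← mul_sum]
    linear_combination K * hw1
  have hμz : ∑ i ∈ A.disjSum (A ×ˢ B), μ i • z i =
      K • (∑ a ∈ A, w a • a + ∑ b ∈ B, w b • b) := by
    simp only [μ, z, sum_disjSum, Sum.elim_inl, Sum.elim_inr, id_eq]
    rw [sum_smul_cutPoint A B w hA hB]
    simp only [mul_smul, ← smul_sum]
    module
  have hz : ∀ i ∈ A.disjSum (A ×ˢ B),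
      z i ∈ (↑(A ∪ (A ×ˢ B).image fun ab => cutPoint ℓ c ab.1 ab.2) : Set E) := by
    rintro (a | ab) hi
    · exact mem_union_left _ (inl_mem_disjSum.1 hi)
    · exact mem_union_right _ (mem_image_of_mem _ (inr_mem_disjSum.1 hi))
  have hx : (A.disjSum (A ×ˢ B)).centerMass μ z = ∑ a ∈ A, w a • a + ∑ b ∈ B, w b • b := by
    rw [centerMass, hμ, hμz, inv_smul_smul₀ hK.ne']
  exact hx ▸ centerMass_mem_convexHull _ hμ0 (hμ ▸ hK) hz

variable (ℓ c) in
open Classical in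
def cutVertices (V : Finset E) : Finset E :=
  V.filter (ℓ · ≤ c) ∪
    (V.filter (ℓ · ≤ c) ×ˢ V.filter (c < ℓ ·)).image fun ab => cutPoint ℓ c ab.1 ab.2

lemma mem_convexHull_cutVertices {V : Finset E} {x : E} (hx : x ∈ convexHull 𝕜 (V : Set E))
    (hxc : ℓ x ≤ c) : x ∈ convexHull 𝕜 (cutVertices ℓ c V : Set E) := by
  classical
  obtain ⟨w, hw0, hw1, rfl⟩ := Finset.mem_convexHull'.1 hx
  set A := V.filter (ℓ · ≤ c)
  set B := V.filter (c < ℓ ·)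
  have hA : ∀ a ∈ A, a ∈ V ∧ ℓ a ≤ c := fun a ha => mem_filter.1 ha
  have hB : ∀ b ∈ B, b ∈ V ∧ c < ℓ b := fun b hb => mem_filter.1 hb
  have hsplit : ∀ f : E → 𝕜, ∑ v ∈ V, f v = ∑ a ∈ A, f a + ∑ b ∈ B, f b := fun f => by
    simp only [A, B, ← not_le, sum_filter_add_sum_filter_not]
  have hsplit' : ∑ v ∈ V, w v • v = ∑ a ∈ A, w a • a + ∑ b ∈ B, w b • b := by
    simp only [A, B, ← not_le, sum_filter_add_sum_filter_not]
  set K := ∑ a ∈ A, w a * (c - ℓ a)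
  set M := ∑ b ∈ B, w b * (ℓ b - c)
  have hwB : ∀ b ∈ B, 0 ≤ w b * (ℓ b - c) := fun b hb =>
    mul_nonneg (hw0 b (hB b hb).1) (sub_nonneg.2 (hB b hb).2.le)
  have hMK : M ≤ K := by
    have hKM : K - M = ∑ v ∈ V, w v * (c - ℓ v) := by
      rw [hsplit, sub_eq_add_neg, ← sum_neg_distrib]
      exact congrArg _ (sum_congr rfl fun b _ => by ring)
    have : K - M = c - ℓ (∑ v ∈ V, w v • v) := by
      rw [hKM, map_sum]
      simp only [map_smul, smul_eq_mul, mul_sub, sum_sub_distrib, ← sum_mul, hw1, one_mul]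
    linarith
  rcases ((sum_nonneg hwB).trans hMK).eq_or_lt with hK | hK
  · have hwB0 : ∀ b ∈ B, w b = 0 := fun b hb =>
      (mul_eq_zero.1 ((sum_eq_zero_iff_of_nonneg hwB).1 ((hMK.trans hK.ge).antisymm
        (sum_nonneg hwB)) b hb)).resolve_right (sub_ne_zero.2 (hB b hb).2.ne')
    refine convexHull_mono (fun a ha => mem_union_left _ ha)
      (Finset.mem_convexHull'.2 ⟨w, fun a ha => hw0 a (hA a ha).1, ?_, ?_⟩)
    · rw [← hw1, hsplit, sum_eq_zero hwB0, add_zero]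
    · rw [hsplit', sum_eq_zero (s := B) fun b hb => by rw [hwB0 b hb, zero_smul], add_zero]
  · rw [hsplit']
    exact sum_add_sum_smul_mem_convexHull_cutPoints (fun a ha => (hA a ha).2)
      (fun b hb => (hB b hb).2) (fun a ha => hw0 a (hA a ha).1) (fun b hb => hw0 b (hB b hb).1)
      (hsplit w ▸ hw1) hMK hK

theorem convexHull_inter_halfSpace (V : Finset E) :
    convexHull 𝕜 (V : Set E) ∩ {x | ℓ x ≤ c} = convexHull 𝕜 (cutVertices ℓ c V : Set E) := by
  classical
  refine subset_antisymm (fun x hx => mem_convexHull_cutVertices hx.1 hx.2) ?_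
  refine convexHull_min ?_ ((convex_convexHull 𝕜 _).inter (convex_halfSpace_le ℓ.isLinear c))
  intro y hy
  rcases mem_union.1 hy with hy | hy
  · obtain ⟨hyV, hyc⟩ := mem_filter.1 hy
    exact ⟨subset_convexHull 𝕜 _ hyV, hyc⟩
  · obtain ⟨⟨a, b⟩, hab, rfl⟩ := mem_image.1 hy
    obtain ⟨⟨haV, ha⟩, ⟨hbV, hb⟩⟩ := And.imp mem_filter.1 mem_filter.1 (mem_product.1 hab)
    exact ⟨segment_subset_convexHull haV hbV (cutPoint_mem_segment ha hb),
      (map_cutPoint (show ℓ a < ℓ b by linarith).ne).le⟩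

theorem exists_finset_convexHull_inter_halfSpaces {ι : Type*} (V : Finset E) (G : Finset ι)
    (ℓ : ι → E →ₗ[𝕜] 𝕜) (c : ι → 𝕜) :
    ∃ W : Finset E, convexHull 𝕜 (V : Set E) ∩ {x | ∀ i ∈ G, ℓ i x ≤ c i} =
      convexHull 𝕜 (W : Set E) := by
  classical
  induction G using Finset.induction_on with
  | empty => exact ⟨V, by simp⟩
  | insert i G _ ih =>
    obtain ⟨W, hW⟩ := ih
    refine ⟨cutVertices (ℓ i) (c i) W, ?_⟩
    rw [← convexHull_inter_halfSpace, ← hW]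
    ext x
    simp only [Set.mem_inter_iff, Set.mem_ofPred_eq, forall_mem_insert]
    tauto

theorem exists_finset_convexHull_inter_forall_le {ι : Type*} (V : Finset E) (G : Finset ι)
    (L : ι → E →ₗ[𝕜] 𝕜) (g : ι) :
    ∃ W : Finset E, convexHull 𝕜 (V : Set E) ∩ {x | ∀ h ∈ G, L g x ≤ L h x} =
      convexHull 𝕜 (W : Set E) := by
  simpa only [LinearMap.sub_apply, sub_nonpos] using
    exists_finset_convexHull_inter_halfSpaces V G (L g - L ·) fun _ => 0

end HalfSpaceCut

lemma exists_pos_forall_mul_le {ι : Type*} (s : Finset ι) (a b : ι → ℝ)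
    (hb : ∀ i ∈ s, 0 ≤ b i) (hab : ∀ i ∈ s, 0 < a i → 0 < b i) :
    ∃ c > 0, ∀ i ∈ s, c * a i ≤ b i := by
  have : ∀ᶠ c in 𝓝[>] (0 : ℝ), ∀ i ∈ s, c * a i ≤ b i := by
    refine (eventually_all_finset s).2 fun i hi => ?_
    rcases le_or_gt (a i) 0 with ha | ha
    · filter_upwards [self_mem_nhdsWithin] with c hc
      exact (mul_nonpos_of_nonneg_of_nonpos (le_of_lt hc) ha).trans (hb i hi)
    · have : Tendsto (· * a i) (𝓝[>] 0) (𝓝 0) :=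
        ((continuous_mul_const (a i)).tendsto' 0 0 (zero_mul _)).mono_left nhdsWithin_le_nhds
      exact this.eventually_le_const (hab i hi ha)
  exact (this.and self_mem_nhdsWithin).exists.imp fun c hc => ⟨hc.2, hc.1⟩

lemma infDist_eq_dist_of_forall_dist_le {X : Type*} [PseudoMetricSpace X] {s : Set X} {x p : X}
    (hp : p ∈ s) (h : ∀ q ∈ s, dist x p ≤ dist x q) : infDist x s = dist x p :=
  (infDist_le_dist_of_mem hp).antisymm ((le_infDist ⟨p, hp⟩).2 h)

section Normed

variable {F : Type*} [NormedAddCommGroup F] [NormedSpace ℝ F]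

theorem convexOn_infDist {s : Set F} (hs : Convex ℝ s) :
    ConvexOn ℝ Set.univ (infDist · s) := by
  rcases s.eq_empty_or_nonempty with rfl | hne
  · simpa only [infDist_empty] using convexOn_const 0 convex_univ
  refine ⟨convex_univ, fun x _ y _ a b ha hb hab => le_of_forall_pos_le_add fun ε hε => ?_⟩
  obtain ⟨p, hp, hxp⟩ := (infDist_lt_iff hne).1 (lt_add_of_pos_right (infDist x s) hε)
  obtain ⟨q, hq, hyq⟩ := (infDist_lt_iff hne).1 (lt_add_of_pos_right (infDist y s) hε)
  calc infDist (a • x + b • y) s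
      ≤ dist (a • x + b • y) (a • p + b • q) := infDist_le_dist_of_mem (hs hp hq ha hb hab)
    _ ≤ a * dist x p + b * dist y q := by
      refine (dist_add_add_le _ _ _ _).trans_eq ?_
      rw [dist_smul₀, dist_smul₀, Real.norm_of_nonneg ha, Real.norm_of_nonneg hb]
    _ ≤ a * (infDist x s + ε) + b * (infDist y s + ε) := by gcongr
    _ = a • infDist x s + b • infDist y s + ε := by
      rw [smul_eq_mul, smul_eq_mul]
      linear_combination ε * hab

theorem exists_pos_mul_infDist_le {ι : Type*} (V : Finset F) (G : Finset ι)
    (L : ι → F →ₗ[ℝ] ℝ) (hV : ∀ x ∈ convexHull ℝ (V : Set F), ∃ g ∈ G, L g x ≤ 0) :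
    ∃ c > 0, ∀ x ∈ convexHull ℝ (V : Set F), ∃ g ∈ G,
      c * infDist x {y ∈ convexHull ℝ (V : Set F) | ∀ g ∈ G, 0 ≤ L g y} ≤ -L g x := by
  set Z := {y ∈ convexHull ℝ (V : Set F) | ∀ g ∈ G, 0 ≤ L g y}
  have hZ : Convex ℝ Z := fun y hy z hz a b ha hb hab =>
    ⟨convex_convexHull ℝ _ hy.1 hz.1 ha hb hab, fun g hg => by
      simpa only [map_add, map_smul, smul_eq_mul] using
        add_nonneg (mul_nonneg ha (hy.2 g hg)) (mul_nonneg hb (hz.2 g hg))⟩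
  choose W hW using exists_finset_convexHull_inter_forall_le V G L
  have hWV : ∀ g, ∀ v ∈ W g, v ∈ convexHull ℝ (V : Set F) ∧ ∀ h ∈ G, L g v ≤ L h v :=
    fun g v hv => (hW g).symm.subset (subset_convexHull ℝ _ hv)
  have hWneg : ∀ i ∈ G.sigma W, 0 ≤ -L i.1 i.2 := by
    rintro ⟨g, v⟩ hgv
    obtain ⟨hvV, hvg⟩ := hWV g v (mem_sigma.1 hgv).2
    obtain ⟨h, hh, hhv⟩ := hV v hvV
    linarith [hvg h hh]
  have hWZ : ∀ i ∈ G.sigma W, 0 < infDist i.2 Z → 0 < -L i.1 i.2 := by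
    rintro ⟨g, v⟩ hgv hpos
    obtain ⟨hvV, hvg⟩ := hWV g v (mem_sigma.1 hgv).2
    by_contra! hle
    exact hpos.ne' (infDist_zero_of_mem ⟨hvV, fun h hh => by linarith [hvg h hh]⟩)
  obtain ⟨c, hc, hcW⟩ := exists_pos_forall_mul_le _ _ _ hWneg hWZ
  refine ⟨c, hc, fun x hx => ?_⟩
  obtain ⟨g, hg, hgx⟩ := exists_min_image G (L · x) (let ⟨g, hg, _⟩ := hV x hx; ⟨g, hg⟩)
  have hxW : x ∈ convexHull ℝ (W g : Set F) := hW g ▸ ⟨hx, hgx⟩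
  obtain ⟨v, hv, hxv⟩ := (((convexOn_infDist hZ).smul hc.le).add
    ((L g).convexOn convex_univ)).exists_ge_of_mem_convexHull (Set.subset_univ _) hxW
  have hcv := hcW ⟨g, v⟩ (mem_sigma.2 ⟨hg, hv⟩)
  simp only [Pi.add_apply, smul_eq_mul] at hxv hcv
  exact ⟨g, hg, by linarith⟩

end Normed

section QuadForm

variable {n : ℕ}

def quadFormBilin (R : Matrix (Fin n) (Fin n) ℝ) :
    EuclideanSpace ℝ (Fin n) →ₗ[ℝ] EuclideanSpace ℝ (Fin n) →ₗ[ℝ] ℝ :=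
  LinearMap.mk₂ ℝ (quadForm R)
    (fun _ _ _ => by simp only [quadForm, PiLp.add_apply, add_mul, sum_add_distrib])
    (fun _ _ _ => by simp only [quadForm, PiLp.smul_apply, smul_eq_mul, mul_sum, mul_assoc])
    (fun _ _ _ => by simp only [quadForm, PiLp.add_apply, mul_add, sum_add_distrib])
    (fun _ _ _ => by
      simp only [quadForm, PiLp.smul_apply, smul_eq_mul, mul_sum]
      exact sum_congr rfl fun _ _ => sum_congr rfl fun _ _ => by ring)

@[simp]
lemma quadFormBilin_apply (R : Matrix (Fin n) (Fin n) ℝ) (x y : EuclideanSpace ℝ (Fin n)) :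
    quadFormBilin R x y = quadForm R x y :=
  rfl

lemma symNash_coe_finset_eq (V : Finset (EuclideanSpace ℝ (Fin n)))
    (R : Matrix (Fin n) (Fin n) ℝ) :
    symNash V R = {y ∈ convexHull ℝ (V : Set _) | ∀ s ∈ V, 0 ≤ quadFormBilin R s y} := by
  ext y
  refine and_congr_right fun _ => ⟨fun h s hs => h s (subset_convexHull ℝ _ hs), fun h => ?_⟩
  exact convexHull_min h (convex_halfSpace_ge ((quadFormBilin R).flip y).isLinear 0)

end QuadForm

theorem error_bound_general {n : ℕ} (S : Set (EuclideanSpace ℝ (Fin n)))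
    (hSfin : S.Finite) (R : Matrix (Fin n) (Fin n) ℝ)
    (hzero : ∀ x ∈ convexHull ℝ S, quadForm R x x = 0) :
    ∃ c > 0, ∀ x ∈ convexHull ℝ S,
      ∀ p ∈ symNash S R, (∀ q ∈ symNash S R, ‖x - p‖ ≤ ‖x - q‖) →
        - sInf ((fun x' => quadForm R x' x) '' (convexHull ℝ S)) ≥ c * ‖x - p‖ := by
  lift S to Finset (EuclideanSpace ℝ (Fin n)) using hSfin with V
  have hV : ∀ x ∈ convexHull ℝ (V : Set _), ∃ s ∈ V, quadFormBilin R s x ≤ 0 := fun x hx =>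
    (((quadFormBilin R).flip x).concaveOn convex_univ).exists_le_of_mem_convexHull
      (Set.subset_univ _) hx |>.imp fun s hs => ⟨hs.1, (hzero x hx).le.trans' hs.2⟩
  obtain ⟨c, hc, hcV⟩ := exists_pos_mul_infDist_le V V (quadFormBilin R) hV
  refine ⟨c, hc, fun x hx p hp hpmin => ?_⟩
  obtain ⟨s, hs, hsx⟩ := hcV x hx
  rw [← symNash_coe_finset_eq] at hsx
  have hdist : infDist x (symNash V R) = ‖x - p‖ := by
    rw [infDist_eq_dist_of_forall_dist_le hp (by simpa only [dist_eq_norm] using hpmin),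
      dist_eq_norm]
  have hbdd : BddBelow ((fun x' => quadForm R x' x) '' convexHull ℝ (V : Set _)) :=
    (V.finite_toSet.isCompact_convexHull (𝕜 := ℝ)).bddBelow_image
      (((quadFormBilin R).flip x).continuous_of_finiteDimensional.continuousOn)
  have := csInf_le hbdd ⟨s, subset_convexHull ℝ _ hs, rfl⟩
  rw [hdist, quadFormBilin_apply] at hsx
  linarith

/-- Error bound: there is a constant `c > 0` such that for every `x` in the
polytope `X = convexHull ℝ S`, `−min_{x' ∈ X} x'ᵀ R x ≥ c·‖x − Π_{X*}(x)‖`,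
where `Π_{X*}(x)` is the Euclidean projection of `x` onto the set `X*` of
symmetric Nash equilibria. -/
theorem error_bound {n : ℕ} (S : Set (EuclideanSpace ℝ (Fin n)))
    (hSfin : S.Finite) (hSne : S.Nonempty) (R : Matrix (Fin n) (Fin n) ℝ)
    (hzero : ∀ x ∈ convexHull ℝ S, quadForm R x x = 0)
    (hne : (symNash S R).Nonempty) :
    ∃ c > 0, ∀ x ∈ convexHull ℝ S,
      ∀ p ∈ symNash S R, (∀ q ∈ symNash S R, ‖x - p‖ ≤ ‖x - q‖) →
        - sInf ((fun x' => quadForm R x' x) '' (convexHull ℝ S)) ≥ c * ‖x - p‖ :=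
  error_bound_general S hSfin R hzero

end
end

section
/- Let X ⊆ ℝ^n be a nonempty compact convex set and R an n×n real matrix with xᵀR x = 0 for every x ∈ X. Let {x^t, x̂^t}_{t≥1} be the sequences produced by the OGD updates on X with matrix R and step size η satisfying 0 < η ≤ min{1/(8‖R‖²), 1}. Then for every T ≥ 1, the time average x̄ := (1/T)·Σ_{s=1}^T x^s satisfies min_{x ∈ X} xᵀR x̄ ≥ −D²/(ηT), where D is the Euclidean diameter of X. -/
open Finset

noncomputable section

/-- The ℓ2 operator norm of a matrix. -/
def l2OpNorm {ι : Type} [Fintype ι] [DecidableEq ι] (R : Matrix ι ι ℝ) : ℝ :=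
  ‖Matrix.toEuclideanCLM (𝕜 := ℝ) R‖

/-- The sequences `x^t, x̂^t` are produced by the OGD updates on `X` with
matrix `R` and step size `η`. -/
def IsOGD {n : ℕ} (X : Set (EuclideanSpace ℝ (Fin n)))
    (R : Matrix (Fin n) (Fin n) ℝ) (η : ℝ)
    (x xh : ℕ → EuclideanSpace ℝ (Fin n)) : Prop :=
  x 0 ∈ X ∧ xh 1 ∈ X ∧
  (∀ t : ℕ, 1 ≤ t → x t ∈ X ∧ ∀ y ∈ X,
    η * quadForm R (x t) (x (t - 1)) + (1 / 2) * ‖x t - xh t‖ ^ 2 ≤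
      η * quadForm R y (x (t - 1)) + (1 / 2) * ‖y - xh t‖ ^ 2) ∧
  (∀ t : ℕ, 1 ≤ t → xh (t + 1) ∈ X ∧ ∀ y ∈ X,
    η * quadForm R (xh (t + 1)) (x t) + (1 / 2) * ‖xh (t + 1) - xh t‖ ^ 2 ≤
      η * quadForm R y (x t) + (1 / 2) * ‖y - xh t‖ ^ 2)

section aux

lemma quadForm_eq_inner {n : ℕ} (R : Matrix (Fin n) (Fin n) ℝ)
    (x y : EuclideanSpace ℝ (Fin n)) :
    quadForm R x y = inner (𝕜 := ℝ) x (Matrix.toEuclideanCLM (𝕜 := ℝ) R y) := by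
  simp only [quadForm, PiLp.inner_apply, RCLike.inner_apply, conj_trivial]
  have h : ∀ i, (Matrix.toEuclideanCLM (𝕜 := ℝ) R y) i = ∑ j, R i j * y j := fun i => rfl
  simp only [h, Finset.mul_sum, Finset.sum_mul]
  exact Finset.sum_congr rfl fun i _ => Finset.sum_congr rfl fun j _ => by ring

lemma abs_quadForm_le {n : ℕ} (R : Matrix (Fin n) (Fin n) ℝ)
    (x y : EuclideanSpace ℝ (Fin n)) :
    |quadForm R x y| ≤ l2OpNorm R * ‖x‖ * ‖y‖ := by
  rw [quadForm_eq_inner]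
  calc |inner (𝕜 := ℝ) x (Matrix.toEuclideanCLM (𝕜 := ℝ) R y)|
      ≤ ‖x‖ * ‖Matrix.toEuclideanCLM (𝕜 := ℝ) R y‖ := abs_real_inner_le_norm _ _
    _ ≤ ‖x‖ * (l2OpNorm R * ‖y‖) := by
        gcongr
        exact (Matrix.toEuclideanCLM (𝕜 := ℝ) R).le_opNorm y
    _ = l2OpNorm R * ‖x‖ * ‖y‖ := by ring

lemma quadForm_sub_left {n : ℕ} (R : Matrix (Fin n) (Fin n) ℝ)
    (a b y : EuclideanSpace ℝ (Fin n)) :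
    quadForm R (a - b) y = quadForm R a y - quadForm R b y := by
  simp only [quadForm_eq_inner, inner_sub_left]

lemma quadForm_sub_right {n : ℕ} (R : Matrix (Fin n) (Fin n) ℝ)
    (y a b : EuclideanSpace ℝ (Fin n)) :
    quadForm R y (a - b) = quadForm R y a - quadForm R y b := by
  simp only [quadForm_eq_inner, map_sub, inner_sub_right]

lemma quadForm_affine {n : ℕ} (R : Matrix (Fin n) (Fin n) ℝ)
    (g a b : EuclideanSpace ℝ (Fin n)) (θ : ℝ) :
    quadForm R (a + θ • (b - a)) g = quadForm R a g + θ * (quadForm R b g - quadForm R a g) := by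
  simp only [quadForm_eq_inner, inner_add_left, inner_smul_left, inner_sub_left,
    conj_trivial]

lemma quadForm_sum_right {n : ℕ} (R : Matrix (Fin n) (Fin n) ℝ)
    (y : EuclideanSpace ℝ (Fin n)) (S : Finset ℕ) (v : ℕ → EuclideanSpace ℝ (Fin n)) :
    quadForm R y (∑ s ∈ S, v s) = ∑ s ∈ S, quadForm R y (v s) := by
  simp only [quadForm_eq_inner, map_sum, inner_sum]

lemma quadForm_smul_right {n : ℕ} (R : Matrix (Fin n) (Fin n) ℝ)
    (y a : EuclideanSpace ℝ (Fin n)) (c : ℝ) :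
    quadForm R y (c • a) = c * quadForm R y a := by
  simp only [quadForm_eq_inner, map_smul, inner_smul_right, smul_eq_mul]

lemma threePoint {E : Type*} [NormedAddCommGroup E] [InnerProductSpace ℝ E]
    {X : Set E} (hX : Convex ℝ X) (L : E → ℝ)
    (hL : ∀ (a b : E) (θ : ℝ), L (a + θ • (b - a)) = L a + θ * (L b - L a))
    (c : E) {p : E} (hp : p ∈ X)
    (hmin : ∀ y ∈ X, L p + (1 / 2) * ‖p - c‖ ^ 2 ≤ L y + (1 / 2) * ‖y - c‖ ^ 2)
    {y : E} (hy : y ∈ X) :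
    L p + (1 / 2) * ‖p - c‖ ^ 2 + (1 / 2) * ‖y - p‖ ^ 2 ≤ L y + (1 / 2) * ‖y - c‖ ^ 2 := by
  have key : ∀ θ : ℝ, 0 < θ → θ < 1 →
      (1 - θ) * (‖y - p‖ ^ 2 / 2)
        ≤ (L y + (1 / 2) * ‖y - c‖ ^ 2) - (L p + (1 / 2) * ‖p - c‖ ^ 2) := by
    intro θ hθ0 hθ1
    have hz : p + θ • (y - p) ∈ X := by
      have := hX hp hy (a := 1 - θ) (b := θ) (by linarith) (le_of_lt hθ0) (by ring)
      convert this using 1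
      rw [sub_smul, one_smul, smul_sub]; abel
    have hmz := hmin _ hz
    have hLz : L (p + θ • (y - p)) = L p + θ * (L y - L p) := hL p y θ
    have hnorm : ‖(p + θ • (y - p)) - c‖ ^ 2
        = ‖p - c‖ ^ 2 + 2 * θ * (inner (𝕜 := ℝ) (p - c) (y - p)) + θ ^ 2 * ‖y - p‖ ^ 2 := by
      have h1 : (p + θ • (y - p)) - c = (p - c) + θ • (y - p) := by abel
      rw [h1, norm_add_sq_real, inner_smul_right, norm_smul]
      simp [mul_pow, abs_of_pos hθ0]
      ring
    have hnorm2 : ‖y - c‖ ^ 2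
        = ‖p - c‖ ^ 2 + 2 * (inner (𝕜 := ℝ) (p - c) (y - p)) + ‖y - p‖ ^ 2 := by
      have h1 : y - c = (p - c) + (y - p) := by abel
      rw [h1, norm_add_sq_real]
    nlinarith [hmz, hLz, hnorm, hnorm2]
  have hΔ0 : (0:ℝ) ≤ (L y + (1 / 2) * ‖y - c‖ ^ 2) - (L p + (1 / 2) * ‖p - c‖ ^ 2) := by
    have := hmin y hy; linarith
  suffices h : ‖y - p‖ ^ 2 / 2 ≤ (L y + (1 / 2) * ‖y - c‖ ^ 2) - (L p + (1 / 2) * ‖p - c‖ ^ 2) by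
    linarith
  set d : ℝ := ‖y - p‖ ^ 2 with hd
  set Δ : ℝ := (L y + (1 / 2) * ‖y - c‖ ^ 2) - (L p + (1 / 2) * ‖p - c‖ ^ 2) with hΔ
  have hd0 : 0 ≤ d := sq_nonneg _
  clear_value d Δ
  clear hd hΔ hmin hL hX hp hy
  by_contra hcon
  push_neg at hcon
  have hdpos : 0 < d := by nlinarith
  have hθ1 : (d / 2 - Δ) / d < 1 := by rw [div_lt_one hdpos]; linarith
  have hθ0 : 0 < (d / 2 - Δ) / d := div_pos (by linarith) hdpos
  have h2 := key _ hθ0 hθ1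
  have h3 : (d / 2 - Δ) / d * d = d / 2 - Δ := div_mul_cancel₀ _ (ne_of_gt hdpos)
  nlinarith [mul_le_mul_of_nonneg_right h2 (le_of_lt hdpos), h3]

end aux

set_option maxHeartbeats 2000000 in
/-- Lemma 10 of the paper: O(1/T) time-average convergence in the symmetric
game `(R,R)`; i.e. `min_{x ∈ X} xᵀ R x̄ ≥ −D²/(ηT)` for the time average
`x̄ = (1/T)Σ_{s=1}^T x^s`, where `D` is the Euclidean diameter of `X`. -/
theorem ogd_time_average {n : ℕ} (X : Set (EuclideanSpace ℝ (Fin n)))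
    (hXne : X.Nonempty) (hXcp : IsCompact X) (hXconv : Convex ℝ X)
    (R : Matrix (Fin n) (Fin n) ℝ)
    (hzero : ∀ x ∈ X, quadForm R x x = 0)
    (η : ℝ) (hη : 0 < η) (hη' : η ≤ min (1 / (8 * l2OpNorm R ^ 2)) 1)
    (x xh : ℕ → EuclideanSpace ℝ (Fin n)) (hogd : IsOGD X R η x xh) :
    ∀ T : ℕ, 1 ≤ T → ∀ y ∈ X,
      quadForm R y ((T : ℝ)⁻¹ • ∑ s ∈ Finset.Icc 1 T, x s)
        ≥ -(Metric.diam X ^ 2 / (η * T)) := by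
  obtain ⟨hx0, hxh1, hup1, hup2⟩ := hogd
  set N : ℝ := l2OpNorm R with hNdef
  set D : ℝ := Metric.diam X with hDdef
  have hN0 : 0 ≤ N := norm_nonneg _
  have hD0 : 0 ≤ D := Metric.diam_nonneg
  have hη1 : η ≤ 1 := le_trans hη' (min_le_right _ _)
  have hηN : η * N ^ 2 ≤ 1 / 8 := by
    rcases eq_or_lt_of_le hN0 with h | h
    · rw [← h]; nlinarith
    · have h8 : (0:ℝ) < 8 * N ^ 2 := by positivity
      have := le_trans hη' (min_le_left _ _)
      rw [le_div_iff₀ h8] at this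
      nlinarith
  have hc : η ^ 2 * N ^ 2 ≤ 1 / 8 := by nlinarith
  have hDle : ∀ u ∈ X, ∀ v ∈ X, ‖u - v‖ ≤ D := fun u hu v hv => by
    rw [← dist_eq_norm]; exact Metric.dist_le_diam_of_mem hXcp.isBounded hu hv
  have hx : ∀ t, x t ∈ X := by
    intro t
    rcases Nat.eq_zero_or_pos t with h | h
    · rw [h]; exact hx0
    · exact (hup1 t h).1
  have hxh : ∀ t, 1 ≤ t → xh t ∈ X := by
    intro t ht
    rcases Nat.lt_or_ge t 2 with h | h
    · interval_cases t
      exact hxh1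
    · obtain ⟨u, rfl⟩ : ∃ u, t = u + 1 := ⟨t - 1, by omega⟩
      exact (hup2 u (by omega)).1
  -- three-point versions of the two updates (indexing t = i + 1)
  have TP1 : ∀ i : ℕ, ∀ z ∈ X,
      η * quadForm R (x (i+1)) (x i) + (1/2) * ‖x (i+1) - xh (i+1)‖ ^ 2
          + (1/2) * ‖z - x (i+1)‖ ^ 2
        ≤ η * quadForm R z (x i) + (1/2) * ‖z - xh (i+1)‖ ^ 2 := by
    intro i z hz
    have h := hup1 (i+1) (by omega)
    simp only [Nat.add_sub_cancel] at h
    exact threePoint hXconv (fun w => η * quadForm R w (x i))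
      (fun a b θ => by rw [quadForm_affine]; ring) (xh (i+1)) h.1 h.2 hz
  have TP2 : ∀ i : ℕ, ∀ z ∈ X,
      η * quadForm R (xh (i+2)) (x (i+1)) + (1/2) * ‖xh (i+2) - xh (i+1)‖ ^ 2
          + (1/2) * ‖z - xh (i+2)‖ ^ 2
        ≤ η * quadForm R z (x (i+1)) + (1/2) * ‖z - xh (i+1)‖ ^ 2 := by
    intro i z hz
    have h := hup2 (i+1) (by omega)
    exact threePoint hXconv (fun w => η * quadForm R w (x (i+1)))
      (fun a b θ => by rw [quadForm_affine]; ring) (xh (i+1)) h.1 h.2 hz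
  intro T hT y hy
  -- per-step inequality
  have step : ∀ i : ℕ,
      (1/2) * ‖y - xh (i+2)‖ ^ 2 - (1/2) * ‖y - xh (i+1)‖ ^ 2
        + (1/2) * ‖x (i+1) - xh (i+1)‖ ^ 2
        - (1/2) * (η ^ 2 * N ^ 2) * ‖x (i+1) - x i‖ ^ 2
      ≤ η * quadForm R y (x (i+1)) := by
    intro i
    have hA := TP1 i (xh (i+2)) (hxh (i+2) (by omega))
    have hB := TP2 i y hy
    have hzx : quadForm R (x (i+1)) (x (i+1)) = 0 := hzero _ (hx (i+1))
    have hexp : quadForm R (xh (i+2) - x (i+1)) (x (i+1) - x i)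
        = quadForm R (xh (i+2)) (x (i+1)) - quadForm R (xh (i+2)) (x i)
          - quadForm R (x (i+1)) (x (i+1)) + quadForm R (x (i+1)) (x i) := by
      rw [quadForm_sub_left, quadForm_sub_right, quadForm_sub_right]; ring
    have habs := abs_quadForm_le R (xh (i+2) - x (i+1)) (x (i+1) - x i)
    have hlow : -(N * ‖xh (i+2) - x (i+1)‖ * ‖x (i+1) - x i‖)
        ≤ quadForm R (xh (i+2) - x (i+1)) (x (i+1) - x i) := neg_le_of_abs_le habs
    have hmul : η * -(N * ‖xh (i+2) - x (i+1)‖ * ‖x (i+1) - x i‖)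
        ≤ η * quadForm R (xh (i+2) - x (i+1)) (x (i+1) - x i) :=
      mul_le_mul_of_nonneg_left hlow (le_of_lt hη)
    have hamgm : -(1/2) * ‖xh (i+2) - x (i+1)‖ ^ 2
          - (1/2) * (η^2 * N^2) * ‖x (i+1) - x i‖ ^ 2
        ≤ η * -(N * ‖xh (i+2) - x (i+1)‖ * ‖x (i+1) - x i‖) := by
      nlinarith [sq_nonneg (‖xh (i+2) - x (i+1)‖ - η * N * ‖x (i+1) - x i‖)]
    have hrev : ‖xh (i+2) - x (i+1)‖ = ‖x (i+1) - xh (i+2)‖ := norm_sub_rev _ _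
    nlinarith [hA, hB, hmul, hamgm, hexp, hzx, hrev]
  -- recursion for consecutive differences
  have recur : ∀ j : ℕ,
      ‖x (j+2) - x (j+1)‖ ^ 2
        ≤ 2 * ‖x (j+2) - xh (j+2)‖ ^ 2 + 2 * (η^2 * N^2) * ‖x (j+1) - x j‖ ^ 2 := by
    intro j
    have hC := TP2 j (x (j+1)) (hx (j+1))
    have hD' := TP1 j (xh (j+2)) (hxh (j+2) (by omega))
    have hzx : quadForm R (x (j+1)) (x (j+1)) = 0 := hzero _ (hx (j+1))
    have hexp : quadForm R (x (j+1) - xh (j+2)) (x (j+1) - x j)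
        = quadForm R (x (j+1)) (x (j+1)) - quadForm R (x (j+1)) (x j)
          - quadForm R (xh (j+2)) (x (j+1)) + quadForm R (xh (j+2)) (x j) := by
      rw [quadForm_sub_left, quadForm_sub_right, quadForm_sub_right]; ring
    have habs := abs_quadForm_le R (x (j+1) - xh (j+2)) (x (j+1) - x j)
    set a : ℝ := ‖x (j+1) - xh (j+2)‖ with ha
    have ha0 : 0 ≤ a := norm_nonneg _
    set b : ℝ := ‖x (j+1) - x j‖ with hb
    have hb0 : 0 ≤ b := norm_nonneg _
    have hrev : ‖xh (j+2) - x (j+1)‖ = a := by rw [ha]; exact norm_sub_rev _ _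
    -- from the two three-point inequalities: a^2 ≤ η * quadForm (...) ≤ η * N * a * b
    have hkey : a ^ 2 ≤ η * (N * a * b) := by
      have hub : quadForm R (x (j+1) - xh (j+2)) (x (j+1) - x j) ≤ N * a * b :=
        le_of_abs_le habs
      have hmul : η * quadForm R (x (j+1) - xh (j+2)) (x (j+1) - x j) ≤ η * (N * a * b) :=
        mul_le_mul_of_nonneg_left hub (le_of_lt hη)
      nlinarith [hC, hD', hexp, hzx, hrev, hmul]
    have hab : a ≤ η * N * b := by
      rcases eq_or_lt_of_le ha0 with h | h
      · rw [← h]; positivity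
      · have : a * a ≤ (η * N * b) * a := by nlinarith
        exact le_of_mul_le_mul_right this h
    have htri : ‖x (j+2) - x (j+1)‖ ≤ ‖x (j+2) - xh (j+2)‖ + a := by
      rw [← hrev]
      calc ‖x (j+2) - x (j+1)‖ = ‖(x (j+2) - xh (j+2)) + (xh (j+2) - x (j+1))‖ := by
            rw [sub_add_sub_cancel]
        _ ≤ ‖x (j+2) - xh (j+2)‖ + ‖xh (j+2) - x (j+1)‖ := norm_add_le _ _
    nlinarith [htri, hab, norm_nonneg (x (j+2) - x (j+1)), norm_nonneg (x (j+2) - xh (j+2)),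
      sq_nonneg (‖x (j+2) - xh (j+2)‖ - a), mul_nonneg (mul_nonneg hη.le hN0) hb0]
  -- abbreviations
  obtain ⟨T', rfl⟩ : ∃ T'', T = T'' + 1 := ⟨T - 1, by omega⟩
  set c : ℝ := η ^ 2 * N ^ 2 with hcdef
  have hc0 : 0 ≤ c := by positivity
  -- telescoping sum
  have htele : ∑ i ∈ range (T'+1),
      ((1/2) * ‖y - xh (i+2)‖ ^ 2 - (1/2) * ‖y - xh (i+1)‖ ^ 2)
      = (1/2) * ‖y - xh (T'+1+1)‖ ^ 2 - (1/2) * ‖y - xh 1‖ ^ 2 :=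
    Finset.sum_range_sub (fun k => (1/2) * ‖y - xh (k+1)‖ ^ 2) (T'+1)
  -- sum of the per-step inequality
  have hh := Finset.sum_le_sum (s := range (T'+1))
    (f := fun i => (1/2) * ‖y - xh (i+2)‖ ^ 2 - (1/2) * ‖y - xh (i+1)‖ ^ 2
        + (1/2) * ‖x (i+1) - xh (i+1)‖ ^ 2 - (1/2) * c * ‖x (i+1) - x i‖ ^ 2)
    (g := fun i => η * quadForm R y (x (i+1))) (fun i _ => step i)
  rw [← Finset.mul_sum] at hh
  have hsplit : ∑ i ∈ range (T'+1),
      ((1/2) * ‖y - xh (i+2)‖ ^ 2 - (1/2) * ‖y - xh (i+1)‖ ^ 2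
        + (1/2) * ‖x (i+1) - xh (i+1)‖ ^ 2 - (1/2) * c * ‖x (i+1) - x i‖ ^ 2)
      = (∑ i ∈ range (T'+1), ((1/2) * ‖y - xh (i+2)‖ ^ 2 - (1/2) * ‖y - xh (i+1)‖ ^ 2))
        + (1/2) * (∑ i ∈ range (T'+1), ‖x (i+1) - xh (i+1)‖ ^ 2)
        - (1/2) * c * (∑ i ∈ range (T'+1), ‖x (i+1) - x i‖ ^ 2) := by
    simp only [Finset.mul_sum, ← Finset.sum_add_distrib, ← Finset.sum_sub_distrib]
  set S : ℝ := ∑ i ∈ range (T'+1), ‖x (i+1) - xh (i+1)‖ ^ 2 with hSdef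
  set Ds : ℝ := ∑ i ∈ range (T'+1), ‖x (i+1) - x i‖ ^ 2 with hDsdef
  have hS0 : 0 ≤ S := Finset.sum_nonneg fun i _ => sq_nonneg _
  have hDs0 : 0 ≤ Ds := Finset.sum_nonneg fun i _ => sq_nonneg _
  rw [hsplit, htele] at hh
  -- bound on the sum of consecutive differences
  have hDsum : Ds ≤ ‖x 1 - x 0‖ ^ 2 + 2 * S + 2 * c * Ds := by
    have h1 : Ds = (∑ i ∈ range T', ‖x (i+1+1) - x (i+1)‖ ^ 2) + ‖x (0+1) - x 0‖ ^ 2 :=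
      Finset.sum_range_succ' (fun i => ‖x (i+1) - x i‖ ^ 2) T'
    have h2 : ∀ i ∈ range T', ‖x (i+1+1) - x (i+1)‖ ^ 2
        ≤ 2 * ‖x (i+1+1) - xh (i+1+1)‖ ^ 2 + 2 * c * ‖x (i+1) - x i‖ ^ 2 :=
      fun i _ => recur i
    have h3 : (∑ i ∈ range T', ‖x (i+1+1) - x (i+1)‖ ^ 2)
        ≤ (∑ i ∈ range T', (2 * ‖x (i+1+1) - xh (i+1+1)‖ ^ 2
            + 2 * c * ‖x (i+1) - x i‖ ^ 2)) := Finset.sum_le_sum h2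
    have h4 : (∑ i ∈ range T', (2 * ‖x (i+1+1) - xh (i+1+1)‖ ^ 2
            + 2 * c * ‖x (i+1) - x i‖ ^ 2))
        = 2 * (∑ i ∈ range T', ‖x (i+1+1) - xh (i+1+1)‖ ^ 2)
          + 2 * c * (∑ i ∈ range T', ‖x (i+1) - x i‖ ^ 2) := by
      rw [Finset.sum_add_distrib, ← Finset.mul_sum, ← Finset.mul_sum]
    have h5 : (∑ i ∈ range T', ‖x (i+1+1) - xh (i+1+1)‖ ^ 2) ≤ S := by
      have h6 : S = (∑ i ∈ range T', ‖x (i+1+1) - xh (i+1+1)‖ ^ 2)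
          + ‖x (0+1) - xh (0+1)‖ ^ 2 :=
        Finset.sum_range_succ' (fun i => ‖x (i+1) - xh (i+1)‖ ^ 2) T'
      have := sq_nonneg ‖x (0+1) - xh (0+1)‖
      linarith
    have h7 : (∑ i ∈ range T', ‖x (i+1) - x i‖ ^ 2) ≤ Ds := by
      have h8 : Ds = (∑ i ∈ range T', ‖x (i+1) - x i‖ ^ 2) + ‖x (T'+1) - x T'‖ ^ 2 :=
        Finset.sum_range_succ (fun i => ‖x (i+1) - x i‖ ^ 2) T'
      have := sq_nonneg ‖x (T'+1) - x T'‖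
      linarith
    have h9 : 2 * c * (∑ i ∈ range T', ‖x (i+1) - x i‖ ^ 2) ≤ 2 * c * Ds :=
      mul_le_mul_of_nonneg_left h7 (by positivity)
    have h10 : ‖x (0+1) - x 0‖ ^ 2 = ‖x 1 - x 0‖ ^ 2 := rfl
    linarith
  -- diameter bounds
  have hd1 : ‖x 1 - x 0‖ ^ 2 ≤ D ^ 2 :=
    pow_le_pow_left₀ (norm_nonneg _) (hDle _ (hx 1) _ (hx 0)) 2
  have hf0 : (1/2) * ‖y - xh 1‖ ^ 2 ≤ (1/2) * D ^ 2 := by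
    have := pow_le_pow_left₀ (norm_nonneg _) (hDle _ hy _ hxh1) 2
    linarith
  have hP : c * Ds ≤ (1/8) * Ds := mul_le_mul_of_nonneg_right hc hDs0
  have hfin : -(D ^ 2) ≤ η * ∑ i ∈ range (T'+1), quadForm R y (x (i+1)) := by
    have hfT := sq_nonneg ‖y - xh (T'+1+1)‖
    nlinarith [hh, hDsum, hP, hf0, hS0, hDs0, hd1, hfT, sq_nonneg D, hD0]
  -- rewrite the goal
  have hIcc : ∑ s ∈ Finset.Icc 1 (T'+1), x s = ∑ i ∈ range (T'+1), x (i+1) := by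
    rw [← Finset.Ico_add_one_right_eq_Icc, Finset.sum_Ico_eq_sum_range]
    simp only [Nat.add_sub_cancel]
    exact Finset.sum_congr rfl fun i _ => by rw [Nat.add_comm]
  rw [hIcc, quadForm_smul_right, quadForm_sum_right]
  have hTpos : (0:ℝ) < ((T'+1 : ℕ) : ℝ) := by positivity
  have hQs : -(D ^ 2) / η ≤ ∑ i ∈ range (T'+1), quadForm R y (x (i+1)) := by
    rw [div_le_iff₀ hη]
    nlinarith [hfin]
  have heq : -(D ^ 2 / (η * ((T'+1 : ℕ) : ℝ))) = ((T'+1 : ℕ) : ℝ)⁻¹ * (-(D ^ 2) / η) := by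
    field_simp
  rw [ge_iff_le, heq]
  exact mul_le_mul_of_nonneg_left hQs (by positivity)


end
end

section
/- Let V be a finite index set, for each u ∈ V let X_u ⊆ ℝ^{d_u} be a nonempty convex set, and for each ordered pair (u,v) with u ≠ v let A^{uv} be a d_u × d_v real matrix. Let R be the block matrix acting on ∏_{u} ℝ^{d_u} whose (u,v) block is −A^{uv} for u ≠ v and zero for u = v, so that xᵀR y = −Σ_{u} Σ_{v ≠ u} x_uᵀ A^{uv} y_v. Suppose x̂ = (x̂_u)_{u∈V} ∈ ∏_u X_u satisfies x̂ᵀR x̂ ≤ xᵀR x̂ + ε for all x ∈ ∏_u X_u (i.e. x̂ is an ε-symmetric Nash equilibrium of the symmetric game (R,R)). Then for every u ∈ V and every x_u ∈ X_u: Σ_{v ≠ u} x̂_uᵀ A^{uv} x̂_v ≥ Σ_{v ≠ u} x_uᵀ A^{uv} x̂_v − ε, i.e. x̂ is an ε-Nash equilibrium of the network game. -/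
open Finset

noncomputable section

/-- The bilinear form `xᵀ M y` for a rectangular matrix `M`. -/
def bilForm {m k : ℕ} (M : Matrix (Fin m) (Fin k) ℝ)
    (x : EuclideanSpace ℝ (Fin m)) (y : EuclideanSpace ℝ (Fin k)) : ℝ :=
  ∑ i, ∑ j, x i * M i j * y j

/-- Lemma 6 of the paper: an ε-symmetric Nash equilibrium of the associated
symmetric game `(R,R)` (whose `(u,v)` block is `−A^{uv}` for `u ≠ v` and zero
otherwise, so that `xᵀ R y = −Σ_u Σ_{v≠u} x_uᵀ A^{uv} y_v`) is an ε-Nash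
equilibrium of the network game. -/
theorem eps_symmetric_nash_is_eps_nash {V : Type} [Fintype V] [DecidableEq V]
    (d : V → ℕ) (X : ∀ u, Set (EuclideanSpace ℝ (Fin (d u))))
    (A : ∀ u v, Matrix (Fin (d u)) (Fin (d v)) ℝ) (ε : ℝ)
    (xhat : ∀ u, EuclideanSpace ℝ (Fin (d u)))
    (hxhat : ∀ u, xhat u ∈ X u)
    (hsym : ∀ x : ∀ u, EuclideanSpace ℝ (Fin (d u)), (∀ u, x u ∈ X u) →
      -(∑ u, ∑ v ∈ Finset.univ.erase u, bilForm (A u v) (xhat u) (xhat v))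
        ≤ -(∑ u, ∑ v ∈ Finset.univ.erase u, bilForm (A u v) (x u) (xhat v))
          + ε) :
    ∀ u : V, ∀ xu ∈ X u,
      (∑ v ∈ Finset.univ.erase u, bilForm (A u v) (xhat u) (xhat v))
        ≥ (∑ v ∈ Finset.univ.erase u, bilForm (A u v) xu (xhat v)) - ε := by
  intro u xu hxu
  set x : ∀ u, EuclideanSpace ℝ (Fin (d u)) := Function.update xhat u xu with hx
  have hxmem : ∀ w, x w ∈ X w := by
    intro w
    by_cases h : w = u
    · subst h; simpa [hx, Function.update_self] using hxu
    · simpa [hx, Function.update_of_ne h] using hxhat w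
  have key := hsym x hxmem
  have hsplit : ∀ y : ∀ u, EuclideanSpace ℝ (Fin (d u)),
      (∑ w, ∑ v ∈ Finset.univ.erase w, bilForm (A w v) (y w) (xhat v))
        = (∑ v ∈ Finset.univ.erase u, bilForm (A u v) (y u) (xhat v))
          + ∑ w ∈ Finset.univ.erase u,
              ∑ v ∈ Finset.univ.erase w, bilForm (A w v) (y w) (xhat v) := by
    intro y
    exact (Finset.add_sum_erase Finset.univ _ (Finset.mem_univ u)).symm
  have hrest : ∀ w ∈ Finset.univ.erase u,
      (∑ v ∈ Finset.univ.erase w, bilForm (A w v) (x w) (xhat v))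
        = ∑ v ∈ Finset.univ.erase w, bilForm (A w v) (xhat w) (xhat v) := by
    intro w hw
    have hwu : w ≠ u := (Finset.mem_erase.mp hw).1
    rw [hx, Function.update_of_ne hwu]
  rw [hsplit x, hsplit xhat, Finset.sum_congr rfl hrest] at key
  have hxu' : x u = xu := Function.update_self u xu xhat
  rw [hxu'] at key
  linarith

end
end

section
/- Let X ⊆ ℝ^n be a nonempty closed convex set, let c_1, …, c_K ∈ ℝ^n, and let X* := {x' ∈ X : c_iᵀx' ≥ 0 for all i = 1, …, K} be nonempty. Let x ∈ X \ X* and let x* := Π_{X*}(x) be the Euclidean projection of x onto X*. Then there exists an index i ∈ {1, …, K} such that c_iᵀx* = 0 and c_iᵀx < 0; that is, x violates at least one constraint that is tight at x*. -/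
open scoped RealInnerProductSpace

noncomputable section

/-- If `x ∈ X` lies outside `X* = {x' ∈ X : cᵢᵀx' ≥ 0 ∀i}` and `p` is the
Euclidean projection of `x` onto `X*`, then `x` violates at least one
constraint `cᵢᵀ(·) ≥ 0` that is tight at `p`. -/
theorem violates_tight_constraint {n K : ℕ}
    (X : Set (EuclideanSpace ℝ (Fin n)))
    (hXne : X.Nonempty) (hXcl : IsClosed X) (hXconv : Convex ℝ X)
    (c : Fin K → EuclideanSpace ℝ (Fin n))
    (hne : {x' ∈ X | ∀ i, 0 ≤ ⟪c i, x'⟫}.Nonempty)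
    (x : EuclideanSpace ℝ (Fin n)) (hx : x ∈ X)
    (hxnot : x ∉ {x' ∈ X | ∀ i, 0 ≤ ⟪c i, x'⟫})
    (p : EuclideanSpace ℝ (Fin n))
    (hp : p ∈ {x' ∈ X | ∀ i, 0 ≤ ⟪c i, x'⟫})
    (hproj : ∀ q ∈ {x' ∈ X | ∀ i, 0 ≤ ⟪c i, x'⟫}, ‖x - p‖ ≤ ‖x - q‖) :
    ∃ i : Fin K, ⟪c i, p⟫ = 0 ∧ ⟪c i, x⟫ < 0 := by
  by_contra hcon
  push_neg at hcon
  have hpX := hp.1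
  have hpc := hp.2
  have hxp : x ≠ p := by rintro rfl; exact hxnot hp
  have hnorm : 0 < ‖x - p‖ := by
    rw [norm_pos_iff, sub_ne_zero]; exact hxp
  have hev : ∀ i : Fin K, ∀ᶠ t : ℝ in nhdsWithin 0 (Set.Ioi 0),
      0 ≤ (1 - t) * ⟪c i, p⟫ + t * ⟪c i, x⟫ := by
    intro i
    rcases lt_or_eq_of_le (hpc i) with hpos | heq
    · have hcont : Continuous fun t : ℝ => (1 - t) * ⟪c i, p⟫ + t * ⟪c i, x⟫ := by
        continuity
      have h0 : (0:ℝ) < (1 - 0) * ⟪c i, p⟫ + 0 * ⟪c i, x⟫ := by simpa using hpos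
      have := (hcont.tendsto 0).eventually (eventually_gt_nhds h0)
      exact (this.filter_mono nhdsWithin_le_nhds).mono fun t ht => ht.le
    · have hcx : 0 ≤ ⟪c i, x⟫ := hcon i heq.symm
      filter_upwards [self_mem_nhdsWithin] with t ht
      have ht' : (0:ℝ) < t := ht
      rw [← heq]
      nlinarith
  have hall : ∀ᶠ t : ℝ in nhdsWithin 0 (Set.Ioi 0),
      ∀ i : Fin K, 0 ≤ (1 - t) * ⟪c i, p⟫ + t * ⟪c i, x⟫ :=
    Filter.eventually_all.2 hev
  have hIoo : Set.Ioo (0:ℝ) 1 ∈ nhdsWithin 0 (Set.Ioi 0) :=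
    Ioo_mem_nhdsGT_of_mem (by constructor <;> norm_num)
  obtain ⟨t, ht, hIoo'⟩ := (hall.and hIoo).exists
  obtain ⟨ht0, ht1⟩ := hIoo'
  set q : EuclideanSpace ℝ (Fin n) := (1 - t) • p + t • x with hq
  have hqX : q ∈ X := hXconv hpX hx (by linarith) ht0.le (by ring)
  have hqc : ∀ i, 0 ≤ ⟪c i, q⟫ := by
    intro i
    have : ⟪c i, q⟫ = (1 - t) * ⟪c i, p⟫ + t * ⟪c i, x⟫ := by
      rw [hq, inner_add_right, real_inner_smul_right, real_inner_smul_right]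
    rw [this]; exact ht i
  have hle := hproj q ⟨hqX, hqc⟩
  have hxq : x - q = (1 - t) • (x - p) := by
    rw [hq]
    module
  rw [hxq, norm_smul, Real.norm_eq_abs, abs_of_pos (by linarith)] at hle
  nlinarith

end
end

section
/- Let w_1, …, w_m ∈ ℝ^M and let K := { Σ_{i=1}^m λ_i w_i : λ_i ≥ 0 for all i } be the finitely generated convex cone they span. Then there exists a constant C' > 0 such that every v ∈ K can be written as v = Σ_{i=1}^m λ_i w_i with 0 ≤ λ_i ≤ C'·‖v‖ for all i, where ‖·‖ is the Euclidean norm. -/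
/-!
Conic Carathéodory: as long as the generators carrying a nonnegative representation of `v` are
linearly dependent, move along a linear relation with a positive entry until the first
coefficient vanishes. This ends with a representation on a linearly independent subfamily, on
which the coefficients are a linear function of `v`, hence bounded by a constant times `‖v‖`
(an injective linear map on a finite-dimensional space is antilipschitz). There are finitely
many subfamilies, so one constant serves them all.
-/

open Finset NNReal

section Caratheodory

variable {𝕜 E ι : Type*} [Field 𝕜] [LinearOrder 𝕜] [IsStrictOrderedRing 𝕜]
  [AddCommGroup E] [Module 𝕜 E] {w : ι → E} {s : Finset ι}

theorem exists_sum_smul_eq_zero_pos_of_not_linearIndepOn (h : ¬LinearIndepOn 𝕜 w s) :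
    ∃ f : ι → 𝕜, ∑ i ∈ s, f i • w i = 0 ∧ ∃ i ∈ s, 0 < f i := by
  obtain ⟨f, hf, i, hi, hfi⟩ := not_linearIndepOn_finset_iff.mp h
  rcases hfi.lt_or_gt with hneg | hpos
  · exact ⟨-f, by simp [neg_smul, sum_neg_distrib, hf], i, hi, neg_pos.mpr hneg⟩
  · exact ⟨f, hf, i, hi, hpos⟩

theorem exists_nonneg_sum_erase_eq_of_relation [DecidableEq ι] {lam f : ι → 𝕜}
    (hlam : ∀ i ∈ s, 0 ≤ lam i) (hf : ∑ i ∈ s, f i • w i = 0) (hpos : ∃ i ∈ s, 0 < f i) :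
    ∃ j ∈ s, ∃ mu : ι → 𝕜, (∀ i ∈ s.erase j, 0 ≤ mu i) ∧
      ∑ i ∈ s.erase j, mu i • w i = ∑ i ∈ s, lam i • w i := by
  obtain ⟨j, hj, hmin⟩ := (s.filter fun i => 0 < f i).exists_min_image (fun i => lam i / f i)
    (by simpa [Finset.Nonempty] using hpos)
  rw [mem_filter] at hj
  set t := lam j / f j
  have ht : 0 ≤ t := div_nonneg (hlam j hj.1) hj.2.le
  refine ⟨j, hj.1, lam - t • f, fun i hi => ?_, ?_⟩
  · have hi := mem_of_mem_erase hi
    rcases lt_or_ge 0 (f i) with hfi | hfi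
    · have := hmin i (mem_filter.mpr ⟨hi, hfi⟩)
      simpa using (le_div_iff₀ hfi).mp this
    · simp only [Pi.sub_apply, Pi.smul_apply, smul_eq_mul, sub_nonneg]
      exact (mul_nonpos_of_nonneg_of_nonpos ht hfi).trans (hlam i hi)
  · have hj0 : (lam - t • f) j = 0 := by simp [t, div_mul_cancel₀ _ hj.2.ne']
    rw [sum_erase _ (by rw [hj0, zero_smul])]
    simp [sub_smul, mul_smul, sum_sub_distrib, ← smul_sum, hf]

theorem exists_linearIndepOn_nonneg_sum_eq [DecidableEq ι] (s : Finset ι) (lam : ι → 𝕜)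
    (hlam : ∀ i ∈ s, 0 ≤ lam i) :
    ∃ t ⊆ s, LinearIndepOn 𝕜 w t ∧ ∃ mu : ι → 𝕜, (∀ i ∈ t, 0 ≤ mu i) ∧
      ∑ i ∈ t, mu i • w i = ∑ i ∈ s, lam i • w i := by
  induction s using Finset.strongInduction generalizing lam with
  | H s ih =>
    by_cases hs : LinearIndepOn 𝕜 w s
    · exact ⟨s, subset_rfl, hs, lam, hlam, rfl⟩
    obtain ⟨f, hf, hpos⟩ := exists_sum_smul_eq_zero_pos_of_not_linearIndepOn hs
    obtain ⟨j, hj, mu, hmu, hsum⟩ := exists_nonneg_sum_erase_eq_of_relation hlam hf hpos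
    obtain ⟨t, hts, ht, nu, hnu, hnusum⟩ := ih _ (erase_ssubset hj) mu hmu
    exact ⟨t, hts.trans (erase_subset j s), ht, nu, hnu, hnusum.trans hsum⟩

end Caratheodory

theorem LinearIndepOn.exists_abs_le_mul_norm_sum {ι E : Type*} [NormedAddCommGroup E]
    [NormedSpace ℝ E] {w : ι → E} {t : Finset ι} (h : LinearIndepOn ℝ w t) :
    ∃ C : ℝ≥0, ∀ mu : ι → ℝ, ∀ i ∈ t, |mu i| ≤ C * ‖∑ j ∈ t, mu j • w j‖ := by
  obtain ⟨C, -, hC⟩ := LinearMap.exists_antilipschitzWith _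
    (LinearMap.ker_eq_bot.mpr (linearIndependent_iff_injective_fintypeLinearCombination.mp h))
  refine ⟨C, fun mu i hi => ?_⟩
  calc |mu i| = ‖(fun j : t => mu j) ⟨i, hi⟩‖ := (Real.norm_eq_abs _).symm
    _ ≤ ‖fun j : t => mu j‖ := norm_le_pi_norm (fun j : t => mu j) _
    _ ≤ C * ‖Fintype.linearCombination ℝ (fun j : t => w j) (fun j => mu j)‖ :=
      hC.le_mul_norm (map_zero _) _
    _ = C * ‖∑ j ∈ t, mu j • w j‖ := by
      rw [Fintype.linearCombination_apply, sum_coe_sort t fun j => mu j • w j]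

theorem exists_uniform_abs_le_mul_norm_sum_of_linearIndepOn {ι E : Type*} [Finite ι]
    [NormedAddCommGroup E] [NormedSpace ℝ E] (w : ι → E) :
    ∃ C : ℝ≥0, ∀ t : Finset ι, LinearIndepOn ℝ w t →
      ∀ mu : ι → ℝ, ∀ i ∈ t, |mu i| ≤ C * ‖∑ j ∈ t, mu j • w j‖ := by
  have hbound : ∀ t : Finset ι, ∃ C : ℝ≥0, LinearIndepOn ℝ w t →
      ∀ mu : ι → ℝ, ∀ i ∈ t, |mu i| ≤ C * ‖∑ j ∈ t, mu j • w j‖ := fun t => by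
    by_cases ht : LinearIndepOn ℝ w t
    · exact (ht.exists_abs_le_mul_norm_sum).imp fun _ hC _ => hC
    · exact ⟨0, fun ht' => (ht ht').elim⟩
  choose K hK using hbound
  obtain ⟨C, hC⟩ := (Set.finite_range K).bddAbove
  refine ⟨C, fun t ht mu i hi => (hK t ht mu i hi).trans ?_⟩
  gcongr
  exact hC (Set.mem_range_self t)

/-- Points of a finitely generated convex cone admit conic representations
whose coefficients are bounded linearly in the norm of the point, with a
uniform constant. -/
theorem cone_bounded_coefficients {M m : ℕ}
    (w : Fin m → EuclideanSpace ℝ (Fin M)) :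
    ∃ C' > 0, ∀ v : EuclideanSpace ℝ (Fin M),
      (∃ lam : Fin m → ℝ, (∀ i, 0 ≤ lam i) ∧ v = ∑ i, lam i • w i) →
      ∃ mu : Fin m → ℝ, (∀ i, 0 ≤ mu i ∧ mu i ≤ C' * ‖v‖) ∧
        v = ∑ i, mu i • w i := by
  obtain ⟨C, hC⟩ := exists_uniform_abs_le_mul_norm_sum_of_linearIndepOn w
  refine ⟨C + 1, by positivity, ?_⟩
  rintro v ⟨lam, hlam, rfl⟩
  obtain ⟨t, -, ht, mu, hmu, hsum⟩ :=
    exists_linearIndepOn_nonneg_sum_eq (w := w) univ lam fun i _ => hlam i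
  refine ⟨fun i => if i ∈ t then mu i else 0, fun i => ?_, ?_⟩
  · dsimp only
    split_ifs with hi
    · refine ⟨hmu i hi, (le_abs_self _).trans ((hC t ht mu i hi).trans ?_)⟩
      rw [hsum]
      gcongr
      linarith
    · exact ⟨le_rfl, by positivity⟩
  · simp only [ite_smul, zero_smul, sum_ite_mem, univ_inter, hsum]
end
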